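/- arXiv:0904.2925 — 3 statements merged into one kernel-verified Lean document; each statement's English description precedes it below -/
import Mathlib

section
/- Let A be a finite alphabet and let ω : ℕ → A be an infinite word, and let p be a positive integer. Then ω is (purely) periodic with period p (i.e., ω(n+p) = ω(n) for all n ≥ 0) if and only if ρ^ab_ω(p) = 1, i.e., all factors of ω of length p are pairwise abelian equivalent. -/
/-- The factor of the infinite word `ω` of length `n` starting at position `i`,
i.e. the word `ω(i) ω(i+1) ⋯ ω(i+n-1)`. -/
def factor {A : Type*} (ω : ℕ → A) (i n : ℕ) : List A :=
  (List.range n).map fun j => ω (i + j)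

/-- The abelian complexity of `ω`: the number of abelian equivalence classes of
factors of `ω` of length `n`, counted as the number of distinct Parikh (letter-count)
functions of factors of length `n`. -/
noncomputable def abelianComplexity {A : Type*} [DecidableEq A] (ω : ℕ → A) (n : ℕ) : ℕ :=
  Set.ncard {c : A → ℕ | ∃ i : ℕ, c = fun a => (factor ω i n).count a}

lemma factor_succ_left {A : Type*} (ω : ℕ → A) (i n : ℕ) :
    factor ω i (n + 1) = ω i :: factor ω (i + 1) n := by
  simp only [factor, List.range_succ_eq_map, List.map_cons, List.map_map, Nat.add_zero]
  congr 1
  apply List.map_congr_left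
  intro j _
  simp only [Function.comp]
  congr 1
  omega

lemma factor_succ_right {A : Type*} (ω : ℕ → A) (i n : ℕ) :
    factor ω i (n + 1) = factor ω i n ++ [ω (i + n)] := by
  simp [factor, List.range_succ]

lemma count_step {A : Type*} [DecidableEq A] (ω : ℕ → A) (i q : ℕ) (a : A) :
    (factor ω i (q + 1)).count a =
      (factor ω (i + 1) q).count a + (if ω i = a then 1 else 0) ∧
    (factor ω (i + 1) (q + 1)).count a =
      (factor ω (i + 1) q).count a + (if ω (i + 1 + q) = a then 1 else 0) := by
  constructor
  · rw [factor_succ_left, List.count_cons]; simp [beq_iff_eq]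
  · rw [factor_succ_right, List.count_append, List.count_singleton']

/-- An infinite word over a finite alphabet is purely periodic with period `p > 0`
iff its abelian complexity at `p` equals `1`. -/
theorem periodic_iff_abelianComplexity_eq_one
    {A : Type*} [Fintype A] [DecidableEq A] (ω : ℕ → A) (p : ℕ) (hp : 0 < p) :
    (∀ n : ℕ, ω (n + p) = ω n) ↔ abelianComplexity ω p = 1 := by
  obtain ⟨q, rfl⟩ : ∃ q, p = q + 1 := ⟨p - 1, (Nat.succ_pred_eq_of_pos hp).symm⟩
  constructor
  · intro h
    have key : ∀ i, (fun a => (factor ω i (q + 1)).count a)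
        = (fun a => (factor ω 0 (q + 1)).count a) := by
      intro i
      induction i with
      | zero => rfl
      | succ i ih =>
        rw [← ih]
        funext a
        obtain ⟨h1, h2⟩ := count_step ω i q a
        rw [h2, h1]
        have : ω (i + 1 + q) = ω i := by
          rw [show i + 1 + q = i + (q + 1) by ring, h i]
        rw [this]
    have hset : {c : A → ℕ | ∃ i : ℕ, c = fun a => (factor ω i (q + 1)).count a}
        = {fun a => (factor ω 0 (q + 1)).count a} := by
      ext c
      simp only [Set.mem_setOf_eq, Set.mem_singleton_iff]
      constructor
      · rintro ⟨i, rfl⟩; exact key i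
      · intro hc; exact ⟨0, hc⟩
    rw [abelianComplexity, hset, Set.ncard_singleton]
  · intro h n
    rw [abelianComplexity, Set.ncard_eq_one] at h
    obtain ⟨c, hc⟩ := h
    have key : ∀ i, (fun a => (factor ω i (q + 1)).count a) = c := by
      intro i
      have : (fun a => (factor ω i (q + 1)).count a) ∈
          {c : A → ℕ | ∃ i : ℕ, c = fun a => (factor ω i (q + 1)).count a} := ⟨i, rfl⟩
      rw [hc] at this
      exact this
    have heq : ∀ a, (factor ω n (q + 1)).count a = (factor ω (n + 1) (q + 1)).count a := by
      intro a
      rw [congrFun (key n) a, congrFun (key (n + 1)) a]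
    obtain ⟨h1, h2⟩ := count_step ω n q (ω n)
    have := heq (ω n)
    rw [h1, h2, if_pos rfl] at this
    have hite : (if ω (n + 1 + q) = ω n then 1 else 0) = 1 := by omega
    have : ω (n + 1 + q) = ω n := by
      by_contra hne
      rw [if_neg hne] at hite
      omega
    rwa [show n + (q + 1) = n + 1 + q by ring]
end

section
/- Let w be the infinite binary word w = 0 · 1^{3^0} 0^{3^0} 1^{3^1} 0^{3^1} 1^{3^2} 0^{3^2} ⋯, i.e., w = 0 ∏_{i≥0} 1^{3^i} 0^{3^i}. Then for every n ≥ 0, the abelian complexity of w satisfies ρ^ab_w(n) = n + 1, the maximal possible value of the abelian complexity of a binary word. -/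
/-- The finite prefixes of the word `0 ∏_{i ≥ 0} 1^{3^i} 0^{3^i}`:
`pref 0 = 0` and `pref (i+1) = pref i · 1^{3^i} · 0^{3^i}`. -/
def pref : ℕ → List (Fin 2)
  | 0 => [0]
  | i + 1 => pref i ++ List.replicate (3 ^ i) 1 ++ List.replicate (3 ^ i) 0

/-!
A factor of a binary word is determined up to abelian equivalence by its number of ones,
which lies in `[0, n]`; so `ρ^ab(n) = n + 1` as soon as every count `k ≤ n` occurs.
For `w` it does: the block `1^{3^n} 0^{3^n}` of `w`, with `n ≤ 3^n`, contains `1^k 0^{n-k}`.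
-/

open List

section Factor

variable {A : Type*} (ω : ℕ → A)

@[simp]
lemma length_factor (i n : ℕ) : (factor ω i n).length = n := by
  simp [factor]

lemma factor_add (i m n : ℕ) : factor ω i (m + n) = factor ω i m ++ factor ω (i + m) n := by
  simp [factor, range_add, Function.comp_def, add_assoc]

variable {ω}

lemma factor_eq_replicate_iff {i n : ℕ} {x : A} :
    factor ω i n = replicate n x ↔ ∀ j < n, ω (i + j) = x := by
  simp [factor, eq_replicate_iff]

lemma factor_eq_replicate_of_le {i n j m : ℕ} {x : A} (h : factor ω i n = replicate n x)
    (hij : i ≤ j) (hjm : j + m ≤ i + n) : factor ω j m = replicate m x := by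
  rw [factor_eq_replicate_iff] at h ⊢
  intro l hl
  simpa [show i + (j - i + l) = j + l by omega] using h (j - i + l) (by omega)

lemma factor_sub_eq_replicate_append_replicate {i a b k m : ℕ} {x y : A}
    (h : factor ω i (a + b) = replicate a x ++ replicate b y) (hk : k ≤ a) (hm : m ≤ b) :
    factor ω (i + a - k) (k + m) = replicate k x ++ replicate m y := by
  rw [factor_add] at h
  obtain ⟨hx, hy⟩ := append_inj h (by simp)
  rw [factor_add, show i + a - k + k = i + a by omega]
  exact congrArg₂ (· ++ ·) (factor_eq_replicate_of_le hx (by omega) (by omega))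
    (factor_eq_replicate_of_le hy le_rfl (by omega))

end Factor

lemma count_zero_add_count_one (l : List (Fin 2)) : l.count 0 + l.count 1 = l.length := by
  induction l with
  | nil => rfl
  | cons a l ih => fin_cases a <;> simp <;> omega

lemma abelianComplexity_eq_ncard_range_count_one (ω : ℕ → Fin 2) (n : ℕ) :
    abelianComplexity ω n = (Set.range fun i => (factor ω i n).count 1).ncard := by
  let parikh : ℕ → Fin 2 → ℕ := fun m a => if a = 1 then m else n - m
  have parikh_injective : parikh.Injective := fun a b h => by simpa [parikh] using congrFun h 1
  have parikh_count (i : ℕ) :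
      (fun a => (factor ω i n).count a) = parikh ((factor ω i n).count 1) := by
    have := count_zero_add_count_one (factor ω i n)
    funext a
    fin_cases a <;> simp [parikh] at this ⊢
    omega
  have hset : {c : Fin 2 → ℕ | ∃ i, c = fun a => (factor ω i n).count a}
      = parikh '' Set.range fun i => (factor ω i n).count 1 := by
    simp only [parikh_count, ← Set.range_comp]
    ext c
    simp [eq_comm]
  rw [abelianComplexity, hset, Set.ncard_image_of_injective _ parikh_injective]

lemma abelianComplexity_eq_succ_of_forall_exists_count_one (ω : ℕ → Fin 2) (n : ℕ)
    (h : ∀ k ≤ n, ∃ i, (factor ω i n).count 1 = k) : abelianComplexity ω n = n + 1 := by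
  have hrange : (Set.range fun i => (factor ω i n).count 1) = Set.Iic n := by
    refine Set.Subset.antisymm ?_ fun k hk => h k hk
    rintro _ ⟨i, rfl⟩
    simpa using count_le_length (l := factor ω i n)
  rw [abelianComplexity_eq_ncard_range_count_one, hrange, ← Finset.coe_Iic,
    Set.ncard_coe_finset, Nat.card_Iic]

lemma length_pref (i : ℕ) : (pref i).length = 3 ^ i := by
  induction i with
  | zero => rfl
  | succ i ih => simp [pref, ih, pow_succ]; ring

lemma factor_three_pow_of_prefix {w : ℕ → Fin 2}
    (hw : ∀ i : ℕ, factor w 0 (pref i).length = pref i) (i : ℕ) :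
    factor w (3 ^ i) (3 ^ i + 3 ^ i) = replicate (3 ^ i) 1 ++ replicate (3 ^ i) 0 := by
  have h := hw (i + 1)
  rw [length_pref, show 3 ^ (i + 1) = 3 ^ i + (3 ^ i + 3 ^ i) by ring, factor_add,
    pref, append_assoc] at h
  simpa using append_inj_right h (by simp [length_pref])

lemma exists_count_one_factor_of_prefix {w : ℕ → Fin 2}
    (hw : ∀ i : ℕ, factor w 0 (pref i).length = pref i)
    {n k : ℕ} (hk : k ≤ n) :
    ∃ i, (factor w i n).count 1 = k := by
  have hn : n ≤ 3 ^ n := (Nat.lt_pow_self (by norm_num)).le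
  refine ⟨3 ^ n + 3 ^ n - k, ?_⟩
  have hfactor := factor_sub_eq_replicate_append_replicate (factor_three_pow_of_prefix hw n)
    (k := k) (m := n - k) (by omega) (by omega)
  rw [show k + (n - k) = n by omega] at hfactor
  simp [hfactor, count_replicate]

/-- The infinite binary word `w = 0 ∏_{i ≥ 0} 1^{3^i} 0^{3^i}` has maximal
abelian complexity: `ρ^ab_w(n) = n + 1` for all `n`. -/
theorem abelianComplexity_of_prodWord (w : ℕ → Fin 2)
    (hw : ∀ i : ℕ, factor w 0 (pref i).length = pref i) :
    ∀ n : ℕ, abelianComplexity w n = n + 1 :=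
  fun n => abelianComplexity_eq_succ_of_forall_exists_count_one w n
    fun _ hk => exists_count_one_factor_of_prefix hw hk
end

section
/- Let x be an infinite word over a finite alphabet and let m be a fixed positive integer. Suppose that for every integer k ≥ 1 and every position i ≥ 0, the suffix of x starting at position i begins in an abelian k-power with abelian period m. Then x is ultimately periodic. -/
/-- `ω` is ultimately periodic: of the form `u v v v ⋯` with `v` nonempty. -/
def UltimatelyPeriodic {A : Type*} (ω : ℕ → A) : Prop :=
  ∃ m p : ℕ, 0 < p ∧ ∀ n : ℕ, m ≤ n → ω (n + p) = ω n

/-- The word `ω` has an abelian `k`-power with abelian period `ℓ > 0` starting at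
position `i`. -/
def AbelianPowerAt {A : Type*} [DecidableEq A] (ω : ℕ → A) (i k ℓ : ℕ) : Prop :=
  0 < ℓ ∧ ∀ j₁ j₂ : ℕ, j₁ < k → j₂ < k → ∀ a : A,
    (factor ω (i + j₁ * ℓ) ℓ).count a = (factor ω (i + j₂ * ℓ) ℓ).count a

lemma factor_step {A : Type*} [DecidableEq A] (ω : ℕ → A) (i n : ℕ) (a : A) :
    (factor ω i (n + 1)).count a + (if ω (i + (n + 1)) = a then 1 else 0)
      = (factor ω (i + 1) (n + 1)).count a + (if ω i = a then 1 else 0) := by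
  rw [factor_succ_left, factor_succ_right]
  have : i + 1 + n = i + (n + 1) := by ring
  rw [this]
  simp [List.count_cons, List.count_append]
  split_ifs <;> ring

/-- If every position of an infinite word `x` over a finite alphabet begins in an
abelian `k`-power with the same fixed abelian period `m` for every `k ≥ 1`,
then `x` is ultimately periodic. -/
theorem ultimately_periodic_of_abelian_powers_fixed_period
    {A : Type*} [Fintype A] [DecidableEq A] (x : ℕ → A) (m : ℕ) (hm : 0 < m)
    (h : ∀ k : ℕ, 1 ≤ k → ∀ i : ℕ, AbelianPowerAt x i k m) :
    UltimatelyPeriodic x := by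
  -- counts of length-m blocks at distance m agree
  have hc : ∀ i : ℕ, ∀ a : A,
      (factor x i m).count a = (factor x (i + m) m).count a := by
    intro i a
    have := (h 2 (by norm_num) i).2 0 1 (by norm_num) (by norm_num) a
    simpa using this
  obtain ⟨n, rfl⟩ : ∃ n, m = n + 1 := ⟨m - 1, by omega⟩
  refine ⟨0, n + 1, Nat.succ_pos n, fun i _ => ?_⟩
  set a := x (i + (n + 1)) with ha
  have e1 := hc i a
  have e2 := hc (i + 1) a
  have s1 := factor_step x i n a
  have s2 := factor_step x (i + (n + 1)) n a
  rw [← e1, (by ring : i + (n + 1) + 1 = i + 1 + (n + 1)), ← e2] at s2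
  have hA : (if x (i + (n + 1)) = a then (1:ℕ) else 0) = 1 := by simp [ha]
  rw [hA] at s1 s2
  by_cases h0 : x i = a
  · exact h0.symm
  · exfalso
    rw [if_neg h0] at s1
    by_cases h2 : x (i + (n + 1) + (n + 1)) = a
    · rw [if_pos h2] at s2; omega
    · rw [if_neg h2] at s2; omega
end
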